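/- Let f: H → H' be a homomorphism of weak bialgebras and let f*: M^H → M^{H'} be the induced push-forward functor on categories of finite-dimensional right comodules. A right H-comodule N is pushed forward by f* to a comodule isomorphic to the monoidal unit of M^{H'} if and only if N ≅ H_s^g for some group-like element g ∈ H with f(g) = 1. In this case g = (ε⊗id)(β_N(η(1))) where β_N is the coaction of N composed with the identification of the underlying space of N with H_s. -/
import Mathlib


open TensorProduct

noncomputable section

/-- The data of a (candidate) weak bialgebra over `k`: an associative unital
multiplication `mul` with unit `one`, a comultiplication `comul` and a counit `counit`. -/
structure WBData (k : Type) [CommRing k] (H : Type) [AddCommGroup H] [Module k H] where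
  mul : H →ₗ[k] H →ₗ[k] H
  one : H
  comul : H →ₗ[k] H ⊗[k] H
  counit : H →ₗ[k] k

namespace WBData

variable {k : Type} [CommRing k] {H : Type} [AddCommGroup H] [Module k H] (W : WBData k H)

/-- Multiplication as a map on the tensor product. -/
def mulT : H ⊗[k] H →ₗ[k] H := TensorProduct.lift W.mul

/-- The induced multiplication on `H ⊗ H`: `(a⊗b)·(c⊗d) = (ac)⊗(bd)`. -/
def mul₂ (x y : H ⊗[k] H) : H ⊗[k] H :=
  TensorProduct.map W.mulT W.mulT (TensorProduct.tensorTensorTensorComm k H H H H (x ⊗ₜ[k] y))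

/-- The source counital map `ε_s(h) = 1' ε(h 1'')`. -/
def εsMap : H →ₗ[k] H :=
  (TensorProduct.lid k H).toLinearMap
    ∘ₗ LinearMap.rTensor H (W.counit ∘ₗ W.mulT)
    ∘ₗ (TensorProduct.assoc k H H H).symm.toLinearMap
    ∘ₗ (TensorProduct.mk k H (H ⊗[k] H)).flip ((TensorProduct.comm k H H) (W.comul W.one))

/-- The target counital map `ε_t(h) = ε(1' h) 1''`. -/
def εtMap : H →ₗ[k] H :=
  (TensorProduct.rid k H).toLinearMap
    ∘ₗ LinearMap.lTensor H (W.counit ∘ₗ W.mulT)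
    ∘ₗ (TensorProduct.assoc k H H H).toLinearMap
    ∘ₗ (TensorProduct.mk k (H ⊗[k] H) H) ((TensorProduct.comm k H H) (W.comul W.one))

/-- The map `\bar ε_s(h) = 1' ε(1'' h)`. -/
def barεsMap : H →ₗ[k] H :=
  (TensorProduct.rid k H).toLinearMap
    ∘ₗ LinearMap.lTensor H (W.counit ∘ₗ W.mulT)
    ∘ₗ (TensorProduct.assoc k H H H).toLinearMap
    ∘ₗ (TensorProduct.mk k (H ⊗[k] H) H) (W.comul W.one)

/-- The source base algebra `H_s = ε_s(H)`. -/
def Hs : Submodule k H := LinearMap.range W.εsMap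

/-- The target base algebra `H_t = ε_t(H)`. -/
def Ht : Submodule k H := LinearMap.range W.εtMap

/-- The axioms of a weak bialgebra for the data `W`. -/
structure IsWeakBialgebra : Prop where
  mul_assoc : ∀ x y z : H, W.mul (W.mul x y) z = W.mul x (W.mul y z)
  one_mul : ∀ x : H, W.mul W.one x = x
  mul_one : ∀ x : H, W.mul x W.one = x
  coassoc : ∀ x : H,
    (TensorProduct.assoc k H H H) (LinearMap.rTensor H W.comul (W.comul x)) =
      LinearMap.lTensor H W.comul (W.comul x)
  counit_left : ∀ x : H,
    (TensorProduct.lid k H) (LinearMap.rTensor H W.counit (W.comul x)) = x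
  counit_right : ∀ x : H,
    (TensorProduct.rid k H) (LinearMap.lTensor H W.counit (W.comul x)) = x
  comul_mul : ∀ x y : H, W.comul (W.mul x y) = W.mul₂ (W.comul x) (W.comul y)
  counit_mul : ∀ x y z : H, W.counit (W.mul (W.mul x y) z) =
    (LinearMap.mul' k k)
      (TensorProduct.map (W.counit ∘ₗ W.mul x) (W.counit ∘ₗ W.mul.flip z) (W.comul y))
  counit_mul_op : ∀ x y z : H, W.counit (W.mul (W.mul x y) z) =
    (LinearMap.mul' k k)
      (TensorProduct.map (W.counit ∘ₗ W.mul x) (W.counit ∘ₗ W.mul.flip z)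
        ((TensorProduct.comm k H H) (W.comul y)))
  comul_one : LinearMap.rTensor H W.comul (W.comul W.one) =
    (LinearMap.rTensor H (TensorProduct.comm k H H).toLinearMap)
      ((TensorProduct.assoc k H H H).symm
        ((TensorProduct.map W.mulT LinearMap.id)
          ((TensorProduct.tensorTensorTensorComm k H H H H)
            (((TensorProduct.comm k H H) (W.comul W.one)) ⊗ₜ[k] (W.comul W.one)))))
  comul_one_op : LinearMap.rTensor H W.comul (W.comul W.one) =
    (LinearMap.rTensor H (TensorProduct.comm k H H).toLinearMap)
      ((TensorProduct.assoc k H H H).symm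
        ((TensorProduct.map (W.mulT ∘ₗ (TensorProduct.comm k H H).toLinearMap) LinearMap.id)
          ((TensorProduct.tensorTensorTensorComm k H H H H)
            (((TensorProduct.comm k H H) (W.comul W.one)) ⊗ₜ[k] (W.comul W.one)))))

/-- `g` is right group-like: `Δ g = (g⊗g)·Δ1` and `ε_s(g) = 1`. -/
def IsRightGroupLike (g : H) : Prop :=
  W.comul g = W.mul₂ (g ⊗ₜ[k] g) (W.comul W.one) ∧ W.εsMap g = W.one

/-- `g` is left group-like: `Δ g = Δ1·(g⊗g)` and `ε_t(g) = 1`. -/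
def IsLeftGroupLike (g : H) : Prop :=
  W.comul g = W.mul₂ (W.comul W.one) (g ⊗ₜ[k] g) ∧ W.εtMap g = W.one

/-- `g` is group-like if it is both right and left group-like. -/
def IsGroupLike (g : H) : Prop := W.IsRightGroupLike g ∧ W.IsLeftGroupLike g

/-- The coaction `x ↦ x' ⊗ (g x'')` of `H` on (the ambient space of) `H_s`,
defining the comodule `H_s^g` for a group-like `g`. -/
def βg (g : H) : H →ₗ[k] H ⊗[k] H :=
  LinearMap.lTensor H (W.mul g) ∘ₗ W.comul

/-- A coaction `β : V → V ⊗ H` is a (right) comodule structure if it is coassociative and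
counital. -/
def IsCoaction {V : Type} [AddCommGroup V] [Module k V] (β : V →ₗ[k] V ⊗[k] H) : Prop :=
  (∀ v : V, (TensorProduct.assoc k V H H) (LinearMap.rTensor H β (β v)) =
      LinearMap.lTensor V W.comul (β v)) ∧
  (∀ v : V, (TensorProduct.rid k V) (LinearMap.lTensor V W.counit (β v)) = v)

/-- The truncation idempotent `P_{V,W}(v⊗w) = (v₀⊗w₀) ε(v₁w₁)` of two comodules, expressed
on the ambient tensor product. -/
def truncP {V U : Type} [AddCommGroup V] [Module k V] [AddCommGroup U] [Module k U]
    (βa : V →ₗ[k] V ⊗[k] H) (βb : U →ₗ[k] U ⊗[k] H) : V ⊗[k] U →ₗ[k] V ⊗[k] U :=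
  (TensorProduct.rid k (V ⊗[k] U)).toLinearMap
    ∘ₗ LinearMap.lTensor (V ⊗[k] U) (W.counit ∘ₗ W.mulT)
    ∘ₗ (TensorProduct.tensorTensorTensorComm k V H U H).toLinearMap
    ∘ₗ TensorProduct.map βa βb

/-- The coaction `v⊗w ↦ (v₀⊗w₀)⊗(v₁w₁)` on the (truncated) tensor product of two comodules,
expressed on the ambient tensor product. -/
def βtens {V U : Type} [AddCommGroup V] [Module k V] [AddCommGroup U] [Module k U]
    (βa : V →ₗ[k] V ⊗[k] H) (βb : U →ₗ[k] U ⊗[k] H) : V ⊗[k] U →ₗ[k] (V ⊗[k] U) ⊗[k] H :=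
  LinearMap.lTensor (V ⊗[k] U) W.mulT
    ∘ₗ (TensorProduct.tensorTensorTensorComm k V H U H).toLinearMap
    ∘ₗ TensorProduct.map βa βb

/-- The two-sided ideal (with respect to `W.mul`) generated by a set `s`. -/
def twoSidedIdeal (s : Set H) : Submodule k H :=
  sInf {J : Submodule k H | s ⊆ J ∧ ∀ x : H, ∀ y ∈ J, W.mul x y ∈ J ∧ W.mul y x ∈ J}

/-- Powers of an element with respect to `W.mul`. -/
def powW (g : H) : ℕ → H
  | 0 => W.one
  | n + 1 => W.mul (powW g n) g

/-- An antipode for `W`, making it a weak Hopf algebra. -/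
def IsAntipode (S : H →ₗ[k] H) : Prop :=
  (∀ x : H, W.mulT (LinearMap.lTensor H S (W.comul x)) = W.εtMap x) ∧
  (∀ x : H, W.mulT (LinearMap.rTensor H S (W.comul x)) = W.εsMap x) ∧
  (∀ x : H, W.mulT (LinearMap.lTensor H S
      (LinearMap.rTensor H (W.mulT ∘ₗ LinearMap.rTensor H S)
        (LinearMap.rTensor H W.comul (W.comul x)))) = S x)

end WBData

/-- A homomorphism of weak bialgebras: a linear map which is a homomorphism of unital
algebras and of counital coalgebras. -/
def IsWBHom {k : Type} [CommRing k] {H H' : Type} [AddCommGroup H] [Module k H]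
    [AddCommGroup H'] [Module k H'] (W : WBData k H) (W' : WBData k H')
    (f : H →ₗ[k] H') : Prop :=
  (∀ x y : H, f (W.mul x y) = W'.mul (f x) (f y)) ∧
  f W.one = W'.one ∧
  (∀ x : H, W'.comul (f x) = TensorProduct.map f f (W.comul x)) ∧
  (∀ x : H, W'.counit (f x) = W.counit x)

end

/-! ### Auxiliary development -/

noncomputable section

namespace WBData

variable {k : Type} [CommRing k] {H : Type} [AddCommGroup H] [Module k H] (W : WBData k H)

lemma mulT_tmul (x y : H) : W.mulT (x ⊗ₜ[k] y) = W.mul x y := rfl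

/-- left multiplication -/
def ml (x : H) : H →ₗ[k] H := W.mul x
/-- right multiplication -/
def mr (x : H) : H →ₗ[k] H := W.mul.flip x

@[simp] lemma ml_apply (x y : H) : W.ml x y = W.mul x y := rfl
@[simp] lemma mr_apply (x y : H) : W.mr x y = W.mul y x := rfl

lemma mul2_tmul (x y z w : H) :
    W.mul₂ (x ⊗ₜ[k] y) (z ⊗ₜ[k] w) = (W.mul x z) ⊗ₜ[k] (W.mul y w) := by
  simp [WBData.mul₂, tensorTensorTensorComm_tmul, mulT_tmul]

lemma mul2_sum {ι₁ ι₂ : Type} (S : Finset ι₁) (T : Finset ι₂)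
    (c d : ι₁ → H) (e g : ι₂ → H) :
    W.mul₂ (∑ p ∈ S, c p ⊗ₜ[k] d p) (∑ q ∈ T, e q ⊗ₜ[k] g q)
      = ∑ p ∈ S, ∑ q ∈ T, (W.mul (c p) (e q)) ⊗ₜ[k] (W.mul (d p) (g q)) := by
  have h : (∑ p ∈ S, c p ⊗ₜ[k] d p) ⊗ₜ[k] (∑ q ∈ T, e q ⊗ₜ[k] g q)
      = ∑ p ∈ S, ∑ q ∈ T, (c p ⊗ₜ[k] d p) ⊗ₜ[k] (e q ⊗ₜ[k] g q) := by
    rw [sum_tmul]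
    exact Finset.sum_congr rfl fun p _ => tmul_sum ..
  unfold WBData.mul₂
  rw [h, map_sum, map_sum]
  refine Finset.sum_congr rfl fun p _ => ?_
  rw [map_sum, map_sum]
  refine Finset.sum_congr rfl fun q _ => ?_
  simp [tensorTensorTensorComm_tmul, mulT_tmul]

section Rep

variable (S : Finset (H × H))

lemma εs_apply (hS : W.comul W.one = ∑ p ∈ S, p.1 ⊗ₜ[k] p.2) (h : H) :
    W.εsMap h = ∑ p ∈ S, W.counit (W.mul h p.2) • p.1 := by
  simp only [WBData.εsMap, LinearMap.coe_comp, LinearEquiv.coe_coe, Function.comp_apply]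
  rw [hS]
  simp [map_sum, tmul_sum, mulT_tmul]

lemma εt_apply (hS : W.comul W.one = ∑ p ∈ S, p.1 ⊗ₜ[k] p.2) (h : H) :
    W.εtMap h = ∑ p ∈ S, W.counit (W.mul p.1 h) • p.2 := by
  simp only [WBData.εtMap, LinearMap.coe_comp, LinearEquiv.coe_coe, Function.comp_apply]
  rw [hS]
  simp [map_sum, sum_tmul, mulT_tmul]

lemma barεs_apply (hS : W.comul W.one = ∑ p ∈ S, p.1 ⊗ₜ[k] p.2) (h : H) :
    W.barεsMap h = ∑ p ∈ S, W.counit (W.mul p.2 h) • p.1 := by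
  simp only [WBData.barεsMap, LinearMap.coe_comp, LinearEquiv.coe_coe, Function.comp_apply]
  rw [hS]
  simp [map_sum, sum_tmul, mulT_tmul]

end Rep

lemma βg_applyG (g x : H) {ι : Type} (T : Finset ι) {c d : ι → H}
    (hT : W.comul x = ∑ t ∈ T, c t ⊗ₜ[k] d t) :
    W.βg g x = ∑ t ∈ T, c t ⊗ₜ[k] (W.mul g (d t)) := by
  simp [WBData.βg, hT, map_sum]


section Axioms

lemma counit_left_elem (hW : W.IsWeakBialgebra) {x : H} {ι : Type} {T : Finset ι} {c d : ι → H}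
    (hx : W.comul x = ∑ p ∈ T, c p ⊗ₜ[k] d p) :
    ∑ p ∈ T, W.counit (c p) • d p = x := by
  have h := hW.counit_left x
  rw [hx] at h
  simpa [map_sum] using h

lemma counit_right_elem (hW : W.IsWeakBialgebra) {x : H} {ι : Type} {T : Finset ι} {c d : ι → H}
    (hx : W.comul x = ∑ p ∈ T, c p ⊗ₜ[k] d p) :
    ∑ p ∈ T, W.counit (d p) • c p = x := by
  have h := hW.counit_right x
  rw [hx] at h
  simpa [map_sum] using h

lemma comul_mul_elem (hW : W.IsWeakBialgebra) {x y : H} {ι₁ ι₂ : Type} {T : Finset ι₁} {U : Finset ι₂}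
    {c d : ι₁ → H} {e g : ι₂ → H}
    (hx : W.comul x = ∑ p ∈ T, c p ⊗ₜ[k] d p)
    (hy : W.comul y = ∑ q ∈ U, e q ⊗ₜ[k] g q) :
    W.comul (W.mul x y)
      = ∑ p ∈ T, ∑ q ∈ U, (W.mul (c p) (e q)) ⊗ₜ[k] (W.mul (d p) (g q)) := by
  rw [hW.comul_mul, hx, hy, mul2_sum]

lemma counit_mul_elem (hW : W.IsWeakBialgebra) {y : H} {ι : Type} {T : Finset ι} {c d : ι → H}
    (hy : W.comul y = ∑ p ∈ T, c p ⊗ₜ[k] d p) (x z : H) :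
    W.counit (W.mul (W.mul x y) z)
      = ∑ p ∈ T, W.counit (W.mul x (c p)) * W.counit (W.mul (d p) z) := by
  have h := hW.counit_mul x y z
  rw [hy] at h
  simpa [map_sum] using h

lemma counit_mul_op_elem (hW : W.IsWeakBialgebra) {y : H} {ι : Type} {T : Finset ι} {c d : ι → H}
    (hy : W.comul y = ∑ p ∈ T, c p ⊗ₜ[k] d p) (x z : H) :
    W.counit (W.mul (W.mul x y) z)
      = ∑ p ∈ T, W.counit (W.mul x (d p)) * W.counit (W.mul (c p) z) := by
  have h := hW.counit_mul_op x y z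
  rw [hy] at h
  simpa [map_sum] using h

lemma coassoc_elem (hW : W.IsWeakBialgebra) {x : H} {ι : Type} {T : Finset ι} {c d : ι → H}
    (hx : W.comul x = ∑ p ∈ T, c p ⊗ₜ[k] d p) :
    ∑ p ∈ T, (TensorProduct.assoc k H H H) ((W.comul (c p)) ⊗ₜ[k] d p)
      = ∑ p ∈ T, c p ⊗ₜ[k] W.comul (d p) := by
  have h := hW.coassoc x
  rw [hx] at h
  simpa [map_sum] using h

variable (S : Finset (H × H))

lemma comul_one_elem (hW : W.IsWeakBialgebra) (hS : W.comul W.one = ∑ p ∈ S, p.1 ⊗ₜ[k] p.2) :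
    ∑ p ∈ S, (W.comul p.1) ⊗ₜ[k] p.2
      = ∑ p ∈ S, ∑ q ∈ S, (p.1 ⊗ₜ[k] (W.mul p.2 q.1)) ⊗ₜ[k] q.2 := by
  have h := hW.comul_one
  rw [hS] at h
  simp only [map_sum, tmul_sum, sum_tmul, tensorTensorTensorComm_tmul, mulT_tmul,
    LinearEquiv.coe_coe, LinearMap.rTensor_tmul,  TensorProduct.map_tmul,
    LinearMap.id_coe, id_eq, TensorProduct.assoc_symm_tmul, TensorProduct.comm_tmul] at h
  rw [h]
  exact Finset.sum_comm ..


lemma comul_one_op_elem (hW : W.IsWeakBialgebra) (hS : W.comul W.one = ∑ p ∈ S, p.1 ⊗ₜ[k] p.2) :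
    ∑ p ∈ S, (W.comul p.1) ⊗ₜ[k] p.2
      = ∑ p ∈ S, ∑ q ∈ S, (p.1 ⊗ₜ[k] (W.mul q.1 p.2)) ⊗ₜ[k] q.2 := by
  have h := hW.comul_one_op
  rw [hS] at h
  simp only [map_sum, tmul_sum, sum_tmul, tensorTensorTensorComm_tmul, mulT_tmul,
    LinearEquiv.coe_coe, LinearMap.rTensor_tmul,  TensorProduct.map_tmul,
    LinearMap.id_coe, id_eq, TensorProduct.assoc_symm_tmul, TensorProduct.comm_tmul,
    LinearMap.coe_comp, Function.comp_apply] at h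
  rw [h]
  exact Finset.sum_comm ..


lemma CO2 (hW : W.IsWeakBialgebra) (hS : W.comul W.one = ∑ p ∈ S, p.1 ⊗ₜ[k] p.2) :
    ∑ p ∈ S, p.1 ⊗ₜ[k] W.comul p.2
      = ∑ p ∈ S, ∑ q ∈ S, p.1 ⊗ₜ[k] ((W.mul p.2 q.1) ⊗ₜ[k] q.2) := by
  rw [← coassoc_elem W hW hS]
  rw [← map_sum, comul_one_elem W S hW hS]
  simp [map_sum]

lemma CO2op (hW : W.IsWeakBialgebra) (hS : W.comul W.one = ∑ p ∈ S, p.1 ⊗ₜ[k] p.2) :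
    ∑ p ∈ S, p.1 ⊗ₜ[k] W.comul p.2
      = ∑ p ∈ S, ∑ q ∈ S, p.1 ⊗ₜ[k] ((W.mul q.1 p.2) ⊗ₜ[k] q.2) := by
  rw [← coassoc_elem W hW hS]
  rw [← map_sum, comul_one_op_elem W S hW hS]
  simp [map_sum]

lemma sum_eps_right (hW : W.IsWeakBialgebra) (hS : W.comul W.one = ∑ p ∈ S, p.1 ⊗ₜ[k] p.2) :
    ∑ p ∈ S, W.counit p.2 • p.1 = W.one := counit_right_elem W hW hS

lemma sum_eps_left (hW : W.IsWeakBialgebra) (hS : W.comul W.one = ∑ p ∈ S, p.1 ⊗ₜ[k] p.2) :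
    ∑ p ∈ S, W.counit p.1 • p.2 = W.one := counit_left_elem W hW hS

end Axioms


section Derived

variable (S : Finset (H × H))

/-- generic-index version of `εs_apply` -/
lemma εs_applyG {ι : Type} (T : Finset ι) {c d : ι → H}
    (hT : W.comul W.one = ∑ p ∈ T, c p ⊗ₜ[k] d p) (h : H) :
    W.εsMap h = ∑ p ∈ T, W.counit (W.mul h (d p)) • c p := by
  simp only [WBData.εsMap, LinearMap.coe_comp, LinearEquiv.coe_coe, Function.comp_apply]
  rw [hT]
  simp [map_sum, tmul_sum, mulT_tmul]

/-- the map `τ(h) = ε(h 1') 1''` -/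
def τMap : H →ₗ[k] H := ∑ p ∈ S, (W.counit ∘ₗ W.mr p.1).smulRight p.2

lemma τMap_apply (h : H) : W.τMap S h = ∑ p ∈ S, W.counit (W.mul h p.1) • p.2 := by
  simp [WBData.τMap, LinearMap.sum_apply]

variable (hW : W.IsWeakBialgebra) (hS : W.comul W.one = ∑ p ∈ S, p.1 ⊗ₜ[k] p.2)

include hW hS

lemma F5 (x z : H) :
    W.counit (W.mul x z) = ∑ p ∈ S, W.counit (W.mul x p.1) * W.counit (W.mul p.2 z) := by
  have h := counit_mul_elem W hW hS x z
  rwa [hW.mul_one] at h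

lemma F5' (x z : H) :
    W.counit (W.mul x z) = ∑ p ∈ S, W.counit (W.mul x p.2) * W.counit (W.mul p.1 z) := by
  have h := counit_mul_op_elem W hW hS x z
  rwa [hW.mul_one] at h

lemma eps_εs_abs (w u : H) :
    W.counit (W.mul (W.εsMap w) u) = W.counit (W.mul w u) := by
  rw [εs_apply W S hS w]
  simp only [map_sum, LinearMap.map_smul₂, map_smul, LinearMap.sum_apply,
    LinearMap.smul_apply, smul_eq_mul]
  rw [← F5' W S hW hS w u]

lemma eps_τ_abs (w u : H) :
    W.counit (W.mul (W.τMap S w) u) = W.counit (W.mul w u) := by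
  rw [τMap_apply]
  simp only [map_sum, LinearMap.map_smul₂, map_smul, LinearMap.sum_apply,
    LinearMap.smul_apply, smul_eq_mul]
  rw [← F5 W S hW hS w u]

lemma F1 : W.εsMap W.one = W.one := by
  rw [εs_apply W S hS W.one]
  simp only [hW.one_mul]
  exact sum_eps_right W S hW hS

lemma barεs_one : W.barεsMap W.one = W.one := by
  rw [barεs_apply W S hS W.one]
  simp only [hW.mul_one]
  exact sum_eps_right W S hW hS

lemma N1 : ∑ p ∈ S, ∑ q ∈ S, W.counit (W.mul p.2 q.1) • (p.1 ⊗ₜ[k] q.2)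
    = W.comul W.one := by
  have h := congrArg (LinearMap.rTensor H
    ((TensorProduct.rid k H).toLinearMap ∘ₗ LinearMap.lTensor H W.counit))
    (comul_one_elem W S hW hS)
  simp only [map_sum, LinearMap.rTensor_tmul, LinearMap.coe_comp, Function.comp_apply,
    LinearEquiv.coe_toLinearMap, LinearMap.lTensor_tmul, rid_tmul] at h
  simp only [hW.counit_right] at h
  rw [← hS] at h
  rw [h]
  exact Finset.sum_congr rfl fun p _ => Finset.sum_congr rfl fun q _ => smul_tmul' _ _ _

lemma N2 : ∑ p ∈ S, ∑ q ∈ S, W.counit (W.mul q.1 p.2) • (p.1 ⊗ₜ[k] q.2)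
    = W.comul W.one := by
  have h := congrArg (LinearMap.rTensor H
    ((TensorProduct.rid k H).toLinearMap ∘ₗ LinearMap.lTensor H W.counit))
    (comul_one_op_elem W S hW hS)
  simp only [map_sum, LinearMap.rTensor_tmul, LinearMap.coe_comp, Function.comp_apply,
    LinearEquiv.coe_toLinearMap, LinearMap.lTensor_tmul, rid_tmul] at h
  simp only [hW.counit_right] at h
  rw [← hS] at h
  rw [h]
  exact Finset.sum_congr rfl fun p _ => Finset.sum_congr rfl fun q _ => smul_tmul' _ _ _

lemma N2' : ∑ p ∈ S, (W.εsMap p.1) ⊗ₜ[k] p.2 = W.comul W.one := by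
  rw [← N2 W S hW hS]
  calc ∑ p ∈ S, (W.εsMap p.1) ⊗ₜ[k] p.2
      = ∑ p ∈ S, ∑ q ∈ S, W.counit (W.mul p.1 q.2) • (q.1 ⊗ₜ[k] p.2) := by
        refine Finset.sum_congr rfl fun p _ => ?_
        rw [εs_apply W S hS p.1, sum_tmul]
        exact Finset.sum_congr rfl fun q _ => (smul_tmul' _ _ _).symm
    _ = ∑ q ∈ S, ∑ p ∈ S, W.counit (W.mul p.1 q.2) • (q.1 ⊗ₜ[k] p.2) := Finset.sum_comm ..
    _ = ∑ p ∈ S, ∑ q ∈ S, W.counit (W.mul q.1 p.2) • (p.1 ⊗ₜ[k] q.2) := rfl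

lemma N1' : ∑ p ∈ S, p.1 ⊗ₜ[k] (W.τMap S p.2) = W.comul W.one := by
  rw [← N1 W S hW hS]
  refine Finset.sum_congr rfl fun p _ => ?_
  rw [τMap_apply, tmul_sum]
  exact Finset.sum_congr rfl fun q _ => tmul_smul _ _ _

lemma L3 (h : H) :
    W.comul (W.εsMap h) = ∑ p ∈ S, p.1 ⊗ₜ[k] (W.mul p.2 (W.εsMap h)) := by
  have key2 := congrArg ((TensorProduct.rid k (H ⊗[k] H)).toLinearMap
      ∘ₗ LinearMap.lTensor (H ⊗[k] H) (W.counit ∘ₗ W.ml h)) (comul_one_elem W S hW hS)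
  simp only [map_sum, LinearMap.coe_comp, Function.comp_apply, LinearMap.lTensor_tmul,
    LinearEquiv.coe_toLinearMap, rid_tmul, ml_apply] at key2
  have lhs : W.comul (W.εsMap h) = ∑ x ∈ S, W.counit (W.mul h x.2) • W.comul x.1 := by
    rw [εs_apply W S hS h, map_sum]
    exact Finset.sum_congr rfl fun p _ => map_smul _ _ _
  have rhs : ∀ p : H × H, p.1 ⊗ₜ[k] (W.mul p.2 (W.εsMap h))
      = ∑ q ∈ S, W.counit (W.mul h q.2) • (p.1 ⊗ₜ[k] W.mul p.2 q.1) := by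
    intro p
    rw [εs_apply W S hS h, map_sum, tmul_sum]
    exact Finset.sum_congr rfl fun q _ => by rw [map_smul, tmul_smul]
  rw [lhs, key2]
  exact (Finset.sum_congr rfl fun p _ => (rhs p)).symm

lemma L3' (h : H) :
    W.comul (W.εsMap h) = ∑ p ∈ S, p.1 ⊗ₜ[k] (W.mul (W.εsMap h) p.2) := by
  have key2 := congrArg ((TensorProduct.rid k (H ⊗[k] H)).toLinearMap
      ∘ₗ LinearMap.lTensor (H ⊗[k] H) (W.counit ∘ₗ W.ml h)) (comul_one_op_elem W S hW hS)
  simp only [map_sum, LinearMap.coe_comp, Function.comp_apply, LinearMap.lTensor_tmul,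
    LinearEquiv.coe_toLinearMap, rid_tmul, ml_apply] at key2
  have lhs : W.comul (W.εsMap h) = ∑ x ∈ S, W.counit (W.mul h x.2) • W.comul x.1 := by
    rw [εs_apply W S hS h, map_sum]
    exact Finset.sum_congr rfl fun p _ => map_smul _ _ _
  have rhs : ∀ p : H × H, p.1 ⊗ₜ[k] (W.mul (W.εsMap h) p.2)
      = ∑ q ∈ S, W.counit (W.mul h q.2) • (p.1 ⊗ₜ[k] W.mul q.1 p.2) := by
    intro p
    rw [εs_apply W S hS h, map_sum, LinearMap.sum_apply, tmul_sum]
    refine Finset.sum_congr rfl fun q _ => ?_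
    simp only [map_smul, LinearMap.smul_apply, tmul_smul, smul_tmul']
  rw [lhs, key2]
  exact (Finset.sum_congr rfl fun p _ => (rhs p)).symm

lemma L3comm (h : H) :
    ∑ p ∈ S, p.1 ⊗ₜ[k] (W.mul (W.εsMap h) p.2)
      = ∑ p ∈ S, p.1 ⊗ₜ[k] (W.mul p.2 (W.εsMap h)) :=
  (L3' W S hW hS h).symm.trans (L3 W S hW hS h)

lemma L3τ (w : H) :
    W.comul (W.τMap S w) = ∑ q ∈ S, (W.mul (W.τMap S w) q.1) ⊗ₜ[k] q.2 := by
  have key2 := congrArg ((TensorProduct.lid k (H ⊗[k] H)).toLinearMap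
      ∘ₗ LinearMap.rTensor (H ⊗[k] H) (W.counit ∘ₗ W.ml w)) (CO2 W S hW hS)
  simp only [map_sum, LinearMap.coe_comp, Function.comp_apply, LinearMap.rTensor_tmul,
    LinearEquiv.coe_toLinearMap, lid_tmul, ml_apply] at key2
  have lhs : W.comul (W.τMap S w) = ∑ x ∈ S, W.counit (W.mul w x.1) • W.comul x.2 := by
    rw [τMap_apply, map_sum]
    exact Finset.sum_congr rfl fun p _ => map_smul _ _ _
  have rhs : ∀ q : H × H, (W.mul (W.τMap S w) q.1) ⊗ₜ[k] q.2
      = ∑ p ∈ S, W.counit (W.mul w p.1) • ((W.mul p.2 q.1) ⊗ₜ[k] q.2) := by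
    intro q
    rw [τMap_apply, map_sum, LinearMap.sum_apply, sum_tmul]
    refine Finset.sum_congr rfl fun p _ => ?_
    simp only [map_smul, LinearMap.smul_apply, tmul_smul, smul_tmul']
  rw [lhs, key2, Finset.sum_comm]
  exact (Finset.sum_congr rfl fun q _ => (rhs q)).symm

lemma L3bar (w : H) :
    W.comul (W.barεsMap w)
      = ∑ p ∈ S, ∑ q ∈ S, W.counit (W.mul q.2 w) • (p.1 ⊗ₜ[k] (W.mul p.2 q.1)) := by
  have key2 := congrArg ((TensorProduct.rid k (H ⊗[k] H)).toLinearMap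
      ∘ₗ LinearMap.lTensor (H ⊗[k] H) (W.counit ∘ₗ W.mr w)) (comul_one_elem W S hW hS)
  simp only [map_sum, LinearMap.coe_comp, Function.comp_apply, LinearMap.lTensor_tmul,
    LinearEquiv.coe_toLinearMap, rid_tmul, mr_apply] at key2
  have lhs : W.comul (W.barεsMap w) = ∑ x ∈ S, W.counit (W.mul x.2 w) • W.comul x.1 := by
    rw [barεs_apply W S hS w, map_sum]
    exact Finset.sum_congr rfl fun p _ => map_smul _ _ _
  rw [lhs, key2]

end Derived

section Heavy

variable (S : Finset (H × H))

/-- `mul₂` as a bilinear map -/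
def mul2L : (H ⊗[k] H) →ₗ[k] (H ⊗[k] H) →ₗ[k] (H ⊗[k] H) :=
  LinearMap.compr₂ (TensorProduct.mk k (H ⊗[k] H) (H ⊗[k] H))
    (TensorProduct.map W.mulT W.mulT ∘ₗ (TensorProduct.tensorTensorTensorComm k H H H H).toLinearMap)

lemma mul₂_eq (x y : H ⊗[k] H) : W.mul₂ x y = W.mul2L x y := rfl

lemma mul2L_tmul (x y z w : H) :
    W.mul2L (x ⊗ₜ[k] y) (z ⊗ₜ[k] w) = (W.mul x z) ⊗ₜ[k] (W.mul y w) := by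
  rw [← mul₂_eq]; exact mul2_tmul W x y z w

variable (hW : W.IsWeakBialgebra) (hS : W.comul W.one = ∑ p ∈ S, p.1 ⊗ₜ[k] p.2)

include hW hS

lemma L4 (h : H) :
    LinearMap.rTensor H W.εsMap (W.comul h) = ∑ p ∈ S, p.1 ⊗ₜ[k] (W.mul h p.2) := by
  obtain ⟨T, hT⟩ := TensorProduct.exists_finset (W.comul h)
  set Φ : H ⊗[k] H →ₗ[k] H :=
    TensorProduct.lift (∑ t ∈ T, (W.counit ∘ₗ W.ml t.1).smulRight (W.ml t.2)) with hΦ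
  have Φtmul : ∀ u v : H, Φ (u ⊗ₜ[k] v) = ∑ t ∈ T, W.counit (W.mul t.1 u) • (W.mul t.2 v) := by
    intro u v
    simp [hΦ, LinearMap.sum_apply]
  have claim1 : ∀ x : H, Φ (W.comul x) = W.mul h x := by
    intro x
    obtain ⟨U, hU⟩ := TensorProduct.exists_finset (W.comul x)
    have hcu := hW.counit_left (W.mul h x)
    rw [comul_mul_elem W hW hT hU] at hcu
    simp only [map_sum, LinearMap.rTensor_tmul, lid_tmul] at hcu
    rw [hU, map_sum]
    rw [← hcu, Finset.sum_comm]
    refine Finset.sum_congr rfl fun u _ => ?_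
    rw [Φtmul]
  have hΔh1 : W.comul h = ∑ t ∈ T, ∑ q ∈ S, (W.mul t.1 q.1) ⊗ₜ[k] (W.mul t.2 q.2) := by
    have h2 := comul_mul_elem W hW hT hS
    rwa [hW.mul_one] at h2
  have lhs2 : LinearMap.rTensor H W.εsMap (W.comul h)
      = ∑ t ∈ T, ∑ q ∈ S, ∑ p ∈ S,
          W.counit (W.mul (W.mul t.1 q.1) p.2) • (p.1 ⊗ₜ[k] (W.mul t.2 q.2)) := by
    rw [hΔh1]
    simp only [map_sum, LinearMap.rTensor_tmul]
    refine Finset.sum_congr rfl fun t _ => Finset.sum_congr rfl fun q _ => ?_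
    rw [εs_apply W S hS, sum_tmul]
    exact Finset.sum_congr rfl fun p _ => (smul_tmul' _ _ _).symm
  have rhs2 : ∑ p ∈ S, p.1 ⊗ₜ[k] (W.mul h p.2)
      = ∑ p ∈ S, ∑ q ∈ S, ∑ t ∈ T,
          W.counit (W.mul t.1 (W.mul q.1 p.2)) • (p.1 ⊗ₜ[k] (W.mul t.2 q.2)) := by
    have e1 : ∑ p ∈ S, p.1 ⊗ₜ[k] (W.mul h p.2)
        = ∑ p ∈ S, p.1 ⊗ₜ[k] Φ (W.comul p.2) :=
      Finset.sum_congr rfl fun p _ => by rw [claim1]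
    have e2 := congrArg (LinearMap.lTensor H Φ) (CO2op W S hW hS)
    simp only [map_sum, LinearMap.lTensor_tmul] at e2
    rw [e1, e2]
    refine Finset.sum_congr rfl fun p _ => Finset.sum_congr rfl fun q _ => ?_
    rw [Φtmul, tmul_sum]
    exact Finset.sum_congr rfl fun t _ => (tmul_smul _ _ _)
  rw [lhs2, rhs2]
  simp only [hW.mul_assoc]
  calc ∑ t ∈ T, ∑ q ∈ S, ∑ p ∈ S,
          W.counit (W.mul t.1 (W.mul q.1 p.2)) • (p.1 ⊗ₜ[k] (W.mul t.2 q.2))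
      = ∑ t ∈ T, ∑ p ∈ S, ∑ q ∈ S,
          W.counit (W.mul t.1 (W.mul q.1 p.2)) • (p.1 ⊗ₜ[k] (W.mul t.2 q.2)) :=
        Finset.sum_congr rfl fun t _ => Finset.sum_comm ..
    _ = ∑ p ∈ S, ∑ t ∈ T, ∑ q ∈ S,
          W.counit (W.mul t.1 (W.mul q.1 p.2)) • (p.1 ⊗ₜ[k] (W.mul t.2 q.2)) :=
        Finset.sum_comm ..
    _ = ∑ p ∈ S, ∑ q ∈ S, ∑ t ∈ T,
          W.counit (W.mul t.1 (W.mul q.1 p.2)) • (p.1 ⊗ₜ[k] (W.mul t.2 q.2)) :=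
        Finset.sum_congr rfl fun p _ => Finset.sum_comm ..

lemma S1 {x : H} {ι : Type} {T : Finset ι} {c d : ι → H}
    (hx : W.comul x = ∑ t ∈ T, c t ⊗ₜ[k] d t) (w : H) :
    ∑ t ∈ T, W.counit (W.mul (d t) w) • c t = W.mul x (W.barεsMap w) := by
  have hx1 : W.comul x = ∑ t ∈ T, ∑ p ∈ S, (W.mul (c t) p.1) ⊗ₜ[k] (W.mul (d t) p.2) := by
    have h2 := comul_mul_elem W hW hx hS
    rwa [hW.mul_one] at h2
  have hA := congrArg ((TensorProduct.rid k H).toLinearMap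
      ∘ₗ LinearMap.lTensor H (W.counit ∘ₗ W.mr w)) (hx.symm.trans hx1)
  simp only [map_sum, LinearMap.coe_comp, Function.comp_apply, LinearMap.lTensor_tmul,
    LinearEquiv.coe_toLinearMap, rid_tmul, mr_apply] at hA
  rw [hA]
  have hB := hW.counit_right (W.mul x (W.barεsMap w))
  rw [hW.comul_mul, mul₂_eq, hx, L3bar W S hW hS w] at hB
  simp only [map_sum, map_smul, LinearMap.sum_apply, LinearMap.smul_apply,
    mul2L_tmul, LinearMap.lTensor_tmul, rid_tmul, smul_smul] at hB
  rw [← hB]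
  calc ∑ t ∈ T, ∑ p ∈ S, W.counit (W.mul (W.mul (d t) p.2) w) • (W.mul (c t) p.1)
      = ∑ t ∈ T, ∑ p ∈ S, ∑ q ∈ S,
          (W.counit (W.mul (d t) (W.mul p.2 q.1)) * W.counit (W.mul q.2 w))
            • (W.mul (c t) p.1) := by
        refine Finset.sum_congr rfl fun t _ => Finset.sum_congr rfl fun p _ => ?_
        rw [F5 W S hW hS (W.mul (d t) p.2) w, Finset.sum_smul]
        refine Finset.sum_congr rfl fun q _ => ?_
        rw [hW.mul_assoc]
    _ = ∑ p ∈ S, ∑ t ∈ T, ∑ q ∈ S,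
          (W.counit (W.mul (d t) (W.mul p.2 q.1)) * W.counit (W.mul q.2 w))
            • (W.mul (c t) p.1) := Finset.sum_comm ..
    _ = ∑ p ∈ S, ∑ q ∈ S, ∑ t ∈ T,
          (W.counit (W.mul (d t) (W.mul p.2 q.1)) * W.counit (W.mul q.2 w))
            • (W.mul (c t) p.1) := Finset.sum_congr rfl fun p _ => Finset.sum_comm ..
    _ = ∑ x ∈ S, ∑ x_1 ∈ S, W.counit (W.mul x_1.2 w)
          • ∑ x_2 ∈ T, W.counit (W.mul (d x_2) (W.mul x.2 x_1.1)) • (W.mul (c x_2) x.1) := by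
        refine Finset.sum_congr rfl fun p _ => Finset.sum_congr rfl fun q _ => ?_
        rw [Finset.smul_sum]
        refine Finset.sum_congr rfl fun t _ => ?_
        rw [smul_smul, mul_comm]

lemma S4 {x : H} {ι : Type} {T : Finset ι} {c d : ι → H}
    (hx : W.comul x = ∑ t ∈ T, c t ⊗ₜ[k] d t) (w : H) :
    ∑ t ∈ T, W.counit (W.mul w (d t)) • c t = W.mul (W.εsMap w) x := by
  have hx1 : W.comul x = ∑ p ∈ S, ∑ t ∈ T, (W.mul p.1 (c t)) ⊗ₜ[k] (W.mul p.2 (d t)) := by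
    have h2 := comul_mul_elem W hW hS hx
    rwa [hW.one_mul] at h2
  have hA := congrArg ((TensorProduct.rid k H).toLinearMap
      ∘ₗ LinearMap.lTensor H (W.counit ∘ₗ W.ml w)) (hx.symm.trans hx1)
  simp only [map_sum, LinearMap.coe_comp, Function.comp_apply, LinearMap.lTensor_tmul,
    LinearEquiv.coe_toLinearMap, rid_tmul, ml_apply] at hA
  rw [hA]
  have hB := hW.counit_right (W.mul (W.εsMap w) x)
  rw [hW.comul_mul, mul₂_eq, hx, L3' W S hW hS w] at hB
  simp only [map_sum, LinearMap.sum_apply, mul2L_tmul, LinearMap.lTensor_tmul, rid_tmul] at hB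
  rw [← hB, Finset.sum_comm]
  refine Finset.sum_congr rfl fun t _ => Finset.sum_congr rfl fun p _ => ?_
  rw [hW.mul_assoc (W.εsMap w) p.2 (d t), eps_εs_abs W S hW hS w (W.mul p.2 (d t))]

lemma S3 {x : H} {ι : Type} {T : Finset ι} {c d : ι → H}
    (hx : W.comul x = ∑ t ∈ T, c t ⊗ₜ[k] d t) (w : H) :
    ∑ t ∈ T, W.counit (W.mul w (c t)) • d t = W.mul (W.τMap S w) x := by
  have hx1 : W.comul x = ∑ p ∈ S, ∑ t ∈ T, (W.mul p.1 (c t)) ⊗ₜ[k] (W.mul p.2 (d t)) := by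
    have h2 := comul_mul_elem W hW hS hx
    rwa [hW.one_mul] at h2
  have hA := congrArg ((TensorProduct.lid k H).toLinearMap
      ∘ₗ LinearMap.rTensor H (W.counit ∘ₗ W.ml w)) (hx.symm.trans hx1)
  simp only [map_sum, LinearMap.coe_comp, Function.comp_apply, LinearMap.rTensor_tmul,
    LinearEquiv.coe_toLinearMap, lid_tmul, ml_apply] at hA
  rw [hA]
  have hB := hW.counit_left (W.mul (W.τMap S w) x)
  rw [hW.comul_mul, mul₂_eq, hx, L3τ W S hW hS w] at hB
  simp only [map_sum, LinearMap.sum_apply, mul2L_tmul, LinearMap.rTensor_tmul, lid_tmul] at hB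
  rw [← hB, Finset.sum_comm]
  refine Finset.sum_congr rfl fun t _ => Finset.sum_congr rfl fun p _ => ?_
  rw [hW.mul_assoc (W.τMap S w) p.1 (c t), eps_τ_abs W S hW hS w (W.mul p.1 (c t))]

lemma barεs_Hs (h : H) : W.barεsMap (W.εsMap h) = W.εsMap h := by
  have key := congrArg ((TensorProduct.rid k H).toLinearMap
      ∘ₗ LinearMap.lTensor H (W.counit ∘ₗ W.ml h)) (N1 W S hW hS)
  simp only [map_sum, map_smul, LinearMap.coe_comp, Function.comp_apply,
    LinearMap.lTensor_tmul, LinearEquiv.coe_toLinearMap, rid_tmul, ml_apply, smul_smul] at key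
  rw [barεs_apply W S hS (W.εsMap h)]
  rw [hS] at key
  simp only [map_sum, LinearMap.lTensor_tmul, rid_tmul, LinearMap.coe_comp,
    Function.comp_apply, ml_apply] at key
  calc ∑ p ∈ S, W.counit (W.mul p.2 (W.εsMap h)) • p.1
      = ∑ p ∈ S, ∑ q ∈ S, (W.counit (W.mul p.2 q.1) * W.counit (W.mul h q.2)) • p.1 := by
        refine Finset.sum_congr rfl fun p _ => ?_
        conv_lhs => rw [εs_apply W S hS h]
        rw [map_sum, map_sum, Finset.sum_smul]
        refine Finset.sum_congr rfl fun q _ => ?_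
        rw [map_smul, map_smul, smul_eq_mul, mul_comm]
    _ = ∑ p ∈ S, W.counit (W.mul h p.2) • p.1 := key
    _ = W.εsMap h := (εs_apply W S hS h).symm

end Heavy

section Hom

variable (S : Finset (H × H))
variable (hW : W.IsWeakBialgebra) (hS : W.comul W.one = ∑ p ∈ S, p.1 ⊗ₜ[k] p.2)

include hW hS

lemma F3 (h : H) : W.εsMap (W.εsMap h) = W.εsMap h := by
  have habs : ∀ p : H × H, W.counit (W.mul (W.εsMap h) p.2) = W.counit (W.mul h p.2) :=
    fun p => eps_εs_abs W S hW hS h p.2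
  rw [εs_apply W S hS (W.εsMap h)]
  simp_rw [habs]
  exact (εs_apply W S hS h).symm

lemma Hs_fix {x : H} (hx : x ∈ W.Hs) : W.εsMap x = x := by
  obtain ⟨y, rfl⟩ := hx
  exact F3 W S hW hS y

variable {H' : Type} [AddCommGroup H'] [Module k H'] (W' : WBData k H')
variable (f : H →ₗ[k] H') (hf : IsWBHom W W' f)

include hf

lemma comul_one' : W'.comul W'.one = ∑ p ∈ S, (f p.1) ⊗ₜ[k] (f p.2) := by
  rw [← hf.2.1, hf.2.2.1 W.one, hS]
  simp [map_sum]

lemma L5 (h : H) : f (W.εsMap h) = W'.εsMap (f h) := by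
  rw [εs_apply W S hS h, εs_applyG W' S (comul_one' W S hW hS W' f hf) (f h)]
  rw [map_sum]
  refine Finset.sum_congr rfl fun p _ => ?_
  rw [map_smul, ← hf.2.2.2 (W.mul h p.2), hf.1 h p.2]

lemma f_ker {x : H} (hfx : f x = 0) : W.εsMap x = 0 := by
  rw [εs_apply W S hS x]
  refine Finset.sum_eq_zero fun p _ => ?_
  have h1 : W.counit (W.mul x p.2) = 0 := by
    rw [← hf.2.2.2 (W.mul x p.2), hf.1 x p.2, hfx]
    simp
  rw [h1, zero_smul]

lemma surj_aux (u' : H') :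
    ∃ x : H, W.εsMap x = x ∧ f x = W'.εsMap u' := by
  refine ⟨∑ p ∈ S, W'.counit (W'.mul u' (f p.2)) • p.1, ?_, ?_⟩
  · have key := congrArg ((TensorProduct.rid k H).toLinearMap
        ∘ₗ LinearMap.lTensor H ((W'.counit ∘ₗ W'.ml u') ∘ₗ f))
      ((N2' W S hW hS).trans hS)
    simp only [map_sum, LinearMap.coe_comp, Function.comp_apply, LinearMap.lTensor_tmul,
      LinearEquiv.coe_toLinearMap, rid_tmul, ml_apply] at key
    rw [map_sum]
    rw [← key]
    exact Finset.sum_congr rfl fun p _ => map_smul _ _ _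
  · rw [εs_applyG W' S (comul_one' W S hW hS W' f hf) u', map_sum]
    exact Finset.sum_congr rfl fun p _ => map_smul _ _ _

end Hom

end WBData

end

/-- For a homomorphism `f : H → H'` of weak bialgebras, a finite-dimensional
right `H`-comodule `N = (V, β)` is pushed forward by `f` to (a comodule isomorphic to) the
monoidal unit of `M^{H'}` if and only if `N ≅ H_s^g` for some group-like `g ∈ H` with
`f(g) = 1`; and in this case `g = (ε ⊗ id)(β_N(η(1)))` under the identification of the
underlying space of `N` with `H_s`. -/
theorem pushforward_unit_iff_grouplike {k : Type} [Field k] {H H' V : Type}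
    [AddCommGroup H] [Module k H] [AddCommGroup H'] [Module k H']
    [AddCommGroup V] [Module k V] [Module.Finite k V]
    (W : WBData k H) (W' : WBData k H') (hW : W.IsWeakBialgebra) (hW' : W'.IsWeakBialgebra)
    (f : H →ₗ[k] H') (hf : IsWBHom W W' f)
    (β : V →ₗ[k] V ⊗[k] H) (hβ : W.IsCoaction β) :
    -- 1 = ε_s(1) as an element of H_s
    let oneHs : ↥(W.Hs) := ⟨W.εsMap W.one, ⟨W.one, rfl⟩⟩
    -- push-forward of N is isomorphic to the monoidal unit H'_s of M^{H'} ...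
    ((∃ ψ : V ≃ₗ[k] ↥(W'.Hs), ∀ v : V,
        LinearMap.rTensor H' ((W'.Hs).subtype ∘ₗ ψ.toLinearMap)
          (LinearMap.lTensor V f (β v)) = W'.comul ((ψ v : H'))) ↔
    -- ... iff N ≅ H_s^g for some group-like g with f(g) = 1
      (∃ g : H, W.IsGroupLike g ∧ f g = W'.one ∧
        ∃ φ : V ≃ₗ[k] ↥(W.Hs), ∀ v : V,
          LinearMap.rTensor H ((W.Hs).subtype ∘ₗ φ.toLinearMap) (β v) =
            W.βg g ((φ v : H)))) ∧
    -- and then g = (ε ⊗ id)(β_N(η(1)))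
    (∀ (g : H) (φ : V ≃ₗ[k] ↥(W.Hs)), W.IsGroupLike g → f g = W'.one →
      (∀ v : V, LinearMap.rTensor H ((W.Hs).subtype ∘ₗ φ.toLinearMap) (β v) =
        W.βg g ((φ v : H))) →
      g = (TensorProduct.lid k H)
        (LinearMap.rTensor H (W.counit ∘ₗ (W.Hs).subtype ∘ₗ φ.toLinearMap)
          (β (φ.symm oneHs)))) := by
  intro oneHs
  classical
  obtain ⟨S, hS⟩ := TensorProduct.exists_finset (W.comul W.one)
  have oneHs_val : (oneHs : H) = W.one := WBData.F1 W S hW hS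
  have epsf : ∀ x : H, W.counit x = W'.counit (f x) := fun x => (hf.2.2.2 x).symm
  have ceq1 : ∀ u1 u2 : H, f u1 = f u2 → ∀ a b : H,
      W.counit (W.mul (W.mul u1 a) b) = W.counit (W.mul (W.mul u2 a) b) := by
    intro u1 u2 h a b
    rw [epsf, epsf, hf.1, hf.1, hf.1, hf.1, h]
  have ceq2 : ∀ u1 u2 : H, f u1 = f u2 → ∀ a : H,
      W.counit (W.mul a u1) = W.counit (W.mul a u2) := by
    intro u1 u2 h a
    rw [epsf, epsf, hf.1, hf.1, h]
  have ceq2m : ∀ u1 u2 : H, f u1 = f u2 → ∀ a b : H,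
      W.counit (W.mul (W.mul a u1) b) = W.counit (W.mul (W.mul a u2) b) := by
    intro u1 u2 h a b
    rw [epsf, epsf, hf.1, hf.1, hf.1, hf.1, h]
  have memf : ∀ x : W.Hs, f (x : H) ∈ W'.Hs := by
    rintro ⟨x, y, rfl⟩
    rw [WBData.L5 W S hW hS W' f hf y]
    exact ⟨f y, rfl⟩
  set fHs : W.Hs →ₗ[k] W'.Hs :=
    ((f ∘ₗ W.Hs.subtype).codRestrict W'.Hs (fun x => memf x)) with hfHs
  have fHs_val : ∀ x : W.Hs, (fHs x : H') = f (x : H) := fun x => rfl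
  have hbij : Function.Bijective fHs := by
    constructor
    · intro x y hxy
      have h1 : f ((x : H) - (y : H)) = 0 := by
        rw [map_sub]
        have h2 := congrArg (fun z : W'.Hs => (z : H')) hxy
        simp only [fHs_val] at h2
        rw [h2, sub_self]
      have h2 := WBData.f_ker W S hW hS W' f hf h1
      rw [map_sub, WBData.Hs_fix W S hW hS x.2, WBData.Hs_fix W S hW hS y.2] at h2
      exact Subtype.ext (sub_eq_zero.mp h2)
    · intro y
      obtain ⟨u', hu'⟩ := y.2
      obtain ⟨x, hx1, hx2⟩ := WBData.surj_aux W S hW hS W' f hf u'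
      refine ⟨⟨x, ⟨x, hx1⟩⟩, ?_⟩
      apply Subtype.ext
      rw [fHs_val, hx2, hu']
  set ι : W.Hs ≃ₗ[k] W'.Hs := LinearEquiv.ofBijective fHs hbij with hι
  have ι_val : ∀ x : W.Hs, (ι x : H') = f (x : H) := fun x => rfl
  have L3q : ∀ x : H, W.εsMap x = x →
      W.comul x = ∑ p ∈ S, p.1 ⊗ₜ[k] (W.mul p.2 x) := by
    intro x hx
    conv_lhs => rw [← hx]
    rw [WBData.L3 W S hW hS x]
    simp_rw [hx]
  -- push-forward computation (reverse direction, also reused)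
  have pushf : ∀ (φ : V ≃ₗ[k] ↥(W.Hs)) (g : H), f g = W'.one →
      (∀ v : V, LinearMap.rTensor H ((W.Hs).subtype ∘ₗ φ.toLinearMap) (β v) =
        W.βg g ((φ v : H))) →
      (∃ ψ : V ≃ₗ[k] ↥(W'.Hs), ∀ v : V,
        LinearMap.rTensor H' ((W'.Hs).subtype ∘ₗ ψ.toLinearMap)
          (LinearMap.lTensor V f (β v)) = W'.comul ((ψ v : H'))) := by
    intro φ g hfg hφ
    refine ⟨φ.trans ι, fun v => ?_⟩
    set q : V →ₗ[k] H := W.Hs.subtype ∘ₗ φ.toLinearMap with hqdef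
    have hq1 : W.εsMap (q v) = q v := WBData.Hs_fix W S hW hS (φ v).2
    have hval : ((φ.trans ι) v : H') = f (q v) := by
      rw [LinearEquiv.trans_apply, ι_val]
      rfl
    have e1 : LinearMap.rTensor H' (W'.Hs.subtype ∘ₗ (φ.trans ι).toLinearMap)
          (LinearMap.lTensor V f (β v))
        = TensorProduct.map f f (LinearMap.rTensor H q (β v)) := by
      obtain ⟨T, hT⟩ := TensorProduct.exists_finset (β v)
      rw [hT]
      simp only [map_sum, LinearMap.rTensor_tmul, LinearMap.lTensor_tmul,
        TensorProduct.map_tmul, LinearMap.coe_comp, Function.comp_apply,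
        LinearEquiv.coe_coe]
      exact Finset.sum_congr rfl fun t _ => rfl
    rw [e1]
    have e2 : LinearMap.rTensor H q (β v) = W.βg g (q v) := hφ v
    rw [e2, hval]
    have hΔq := L3q (q v) hq1
    rw [WBData.βg_applyG W g (q v) S hΔq, map_sum]
    have hterm : ∀ p : H × H,
        TensorProduct.map f f (p.1 ⊗ₜ[k] (W.mul g (W.mul p.2 (q v))))
          = (f p.1) ⊗ₜ[k] (f (W.mul p.2 (q v))) := by
      intro p
      rw [TensorProduct.map_tmul, hf.1, hfg, hW'.one_mul]
    simp_rw [hterm]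
    rw [hf.2.2.1 (q v), hΔq]
    simp [map_sum]
  refine ⟨⟨?_, ?_⟩, ?_⟩
  · -- forward direction
    rintro ⟨ψ, hψ⟩
    set φ : V ≃ₗ[k] W.Hs := ψ.trans ι.symm with hφdef
    set q : V →ₗ[k] H := W.Hs.subtype ∘ₗ φ.toLinearMap with hqdef
    have hq1 : ∀ v, W.εsMap (q v) = q v := fun v => WBData.Hs_fix W S hW hS (φ v).2
    have hq2 : ∀ v, ((ψ v : W'.Hs) : H') = f (q v) := by
      intro v
      have h1 : ι (φ v) = ψ v := by
        rw [hφdef]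
        exact ι.apply_symm_apply (ψ v)
      rw [← h1, ι_val]
      rfl
    have hψ' : ∀ v, TensorProduct.map f f (LinearMap.rTensor H q (β v))
        = W'.comul (f (q v)) := by
      intro v
      have h0 := hψ v
      have e1 : LinearMap.rTensor H' (W'.Hs.subtype ∘ₗ ψ.toLinearMap)
            (LinearMap.lTensor V f (β v))
          = TensorProduct.map f f (LinearMap.rTensor H q (β v)) := by
        obtain ⟨T, hT⟩ := TensorProduct.exists_finset (β v)
        rw [hT]
        simp only [map_sum, LinearMap.rTensor_tmul, LinearMap.lTensor_tmul,
          TensorProduct.map_tmul, LinearMap.coe_comp, Function.comp_apply,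
          LinearEquiv.coe_coe]
        refine Finset.sum_congr rfl fun t _ => ?_
        congr 1
        exact hq2 t.1
      rw [← e1, h0, hq2 v]
    set γ : V →ₗ[k] H := (TensorProduct.lid k H).toLinearMap
        ∘ₗ LinearMap.rTensor H (W.counit ∘ₗ q) ∘ₗ β with hγdef
    have γ_apply : ∀ (v : V) (T : Finset (V × H)), β v = ∑ t ∈ T, t.1 ⊗ₜ[k] t.2 →
        γ v = ∑ t ∈ T, W.counit (q t.1) • t.2 := by
      intro v T hT
      rw [hγdef]
      simp only [LinearMap.coe_comp, Function.comp_apply, LinearEquiv.coe_toLinearMap]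
      rw [hT]
      simp [map_sum]
    have R4 : ∀ v, LinearMap.rTensor H γ (β v) = W.comul (γ v) := by
      intro v
      obtain ⟨T, hT⟩ := TensorProduct.exists_finset (β v)
      have hco := hβ.1 v
      set M : V ⊗[k] (H ⊗[k] H) →ₗ[k] H ⊗[k] H :=
        (TensorProduct.lid k (H ⊗[k] H)).toLinearMap
          ∘ₗ LinearMap.rTensor (H ⊗[k] H) (W.counit ∘ₗ q) with hM
      have hMr := congrArg M hco
      have eR : M (LinearMap.lTensor V W.comul (β v)) = W.comul (γ v) := by
        rw [hT, γ_apply v T hT, map_sum]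
        simp only [map_sum, LinearMap.lTensor_tmul, hM, LinearMap.coe_comp,
          Function.comp_apply, LinearMap.rTensor_tmul, LinearEquiv.coe_toLinearMap,
          lid_tmul, map_smul]
      have eL : M ((TensorProduct.assoc k V H H) (LinearMap.rTensor H β (β v)))
          = LinearMap.rTensor H γ (β v) := by
        rw [hT]
        simp only [map_sum, LinearMap.rTensor_tmul]
        refine Finset.sum_congr rfl fun t _ => ?_
        obtain ⟨U, hU⟩ := TensorProduct.exists_finset (β t.1)
        rw [hU, γ_apply t.1 U hU]
        simp only [sum_tmul, map_sum]
        refine Finset.sum_congr rfl fun u _ => ?_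
        rw [assoc_tmul]
        simp only [hM, LinearMap.coe_comp, Function.comp_apply, LinearMap.rTensor_tmul,
          LinearEquiv.coe_toLinearMap, lid_tmul, smul_tmul']
      rw [← eL, hMr, eR]
    have fγ : ∀ v, f (γ v) = f (q v) := by
      intro v
      obtain ⟨T, hT⟩ := TensorProduct.exists_finset (β v)
      have h3 := hψ' v
      rw [hT] at h3
      simp only [map_sum, LinearMap.rTensor_tmul, TensorProduct.map_tmul] at h3
      have h4 := congrArg ((TensorProduct.lid k H').toLinearMap
          ∘ₗ LinearMap.rTensor H' W'.counit) h3
      simp only [map_sum, LinearMap.coe_comp, Function.comp_apply, LinearMap.rTensor_tmul,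
        LinearEquiv.coe_toLinearMap, lid_tmul] at h4
      have h5 : (TensorProduct.lid k H') (LinearMap.rTensor H' W'.counit
          (W'.comul (f (q v)))) = f (q v) := hW'.counit_left (f (q v))
      rw [γ_apply v T hT, map_sum, ← h5, ← h4]
      refine Finset.sum_congr rfl fun t _ => ?_
      rw [map_smul, epsf (q t.1)]
    have R5 : ∀ v, W.εsMap (γ v) = q v := by
      intro v
      have h1 : f (γ v - q v) = 0 := by rw [map_sub, fγ v, sub_self]
      have h2 := WBData.f_ker W S hW hS W' f hf h1
      rw [map_sub, hq1 v] at h2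
      exact sub_eq_zero.mp h2
    have Bmain : ∀ v, LinearMap.rTensor H q (β v)
        = ∑ p ∈ S, p.1 ⊗ₜ[k] (W.mul (γ v) p.2) := by
      intro v
      have hqeq : q = W.εsMap ∘ₗ γ := by
        ext v'
        exact (R5 v').symm
      rw [hqeq, LinearMap.rTensor_comp, LinearMap.comp_apply, R4 v]
      exact WBData.L4 W S hW hS (γ v)
    set es : H →ₗ[k] W.Hs := W.εsMap.codRestrict W.Hs (fun h => ⟨h, rfl⟩) with hes
    set lam : H →ₗ[k] H := γ ∘ₗ (φ.symm.toLinearMap ∘ₗ es) with hlam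
    have lam_qφ : ∀ h : H, q (φ.symm (es h)) = W.εsMap h := by
      intro h
      rw [hqdef]
      simp only [LinearMap.coe_comp, Function.comp_apply, LinearEquiv.coe_toLinearMap]
      rw [φ.apply_symm_apply]
      rfl
    have lam_q : ∀ v, lam (q v) = γ v := by
      intro v
      rw [hlam]
      simp only [LinearMap.coe_comp, Function.comp_apply, LinearEquiv.coe_toLinearMap]
      have h1 : es (q v) = φ v := by
        apply Subtype.ext
        show W.εsMap (q v) = _
        rw [hq1 v]
        rfl
      rw [h1, φ.symm_apply_apply]
    have f_lam : ∀ h : H, f (lam h) = f (W.εsMap h) := by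
      intro h
      rw [hlam]
      simp only [LinearMap.coe_comp, Function.comp_apply, LinearEquiv.coe_toLinearMap]
      rw [fγ (φ.symm (es h)), ← lam_qφ h]
    set u : V := φ.symm oneHs with hu
    set g : H := γ u with hg
    have qu : q u = W.one := by
      rw [hqdef]
      simp only [LinearMap.coe_comp, Function.comp_apply, LinearEquiv.coe_toLinearMap]
      rw [hu, φ.apply_symm_apply]
      exact oneHs_val
    have GG : ∀ v, W.comul (γ v)
        = ∑ p ∈ S, (lam p.1) ⊗ₜ[k] (W.mul (γ v) p.2) := by
      intro v
      have hγlam : γ = lam ∘ₗ q := by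
        ext v'
        exact (lam_q v').symm
      rw [← R4 v, hγlam, LinearMap.rTensor_comp, LinearMap.comp_apply]
      have hq : LinearMap.rTensor H q (β v) = ∑ p ∈ S, p.1 ⊗ₜ[k] (W.mul (γ v) p.2) := by
        have := Bmain v
        rw [hγlam] at this ⊢
        exact this
      rw [hq]
      simp only [map_sum, LinearMap.rTensor_tmul, LinearMap.coe_comp,
        Function.comp_apply, lam_q v]
    have βbar_shift : ∀ z : H, W.εsMap z = z → ∀ w : H,
        (∑ p ∈ S, W.counit (W.mul (W.mul z p.2) w) • p.1)
          = W.barεsMap (W.mul z w) := by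
      intro z hz w
      have hc := WBData.L3comm W S hW hS z
      rw [hz] at hc
      have key := congrArg ((TensorProduct.rid k H).toLinearMap
          ∘ₗ LinearMap.lTensor H (W.counit ∘ₗ W.mr w)) hc
      simp only [map_sum, LinearMap.coe_comp, Function.comp_apply, LinearMap.lTensor_tmul,
        LinearEquiv.coe_toLinearMap, rid_tmul, WBData.mr_apply] at key
      rw [key, WBData.barεs_apply W S hS (W.mul z w)]
      refine Finset.sum_congr rfl fun p _ => ?_
      rw [hW.mul_assoc]
    have GOLDv : ∀ v (w : H), W.mul (γ v) (W.barεsMap w)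
        = lam (W.barεsMap (W.mul (q v) w)) := by
      intro v w
      have s1 := WBData.S1 W S hW hS (GG v) w
      rw [← s1]
      have hsc : ∀ p : H × H, W.counit (W.mul (W.mul (γ v) p.2) w)
          = W.counit (W.mul (W.mul (q v) p.2) w) :=
        fun p => ceq1 (γ v) (q v) (fγ v) p.2 w
      simp_rw [hsc]
      rw [← βbar_shift (q v) (hq1 v) w, map_sum]
      exact Finset.sum_congr rfl fun p _ => (map_smul lam _ _).symm
    have GOLD3 : ∀ w : H, lam (W.barεsMap w) = W.mul g (W.barεsMap w) := by
      intro w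
      have h1 := GOLDv u w
      rw [qu, hW.one_mul] at h1
      exact h1.symm
    have lam_eq : ∀ v, γ v = W.mul g (q v) := by
      intro v
      have h1 := GOLDv v W.one
      rw [hW.mul_one (q v), WBData.barεs_one W S hW hS, hW.mul_one] at h1
      rw [GOLD3 (q v)] at h1
      have h2 : W.barεsMap (q v) = q v := by
        conv_lhs => rw [← hq1 v]
        rw [WBData.barεs_Hs W S hW hS (q v), hq1 v]
      rw [h2] at h1
      exact h1
    have LAMG : ∀ h : H, lam h = W.mul g (W.εsMap h) := by
      intro h
      have h1 : lam h = γ (φ.symm (es h)) := rfl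
      rw [h1, lam_eq (φ.symm (es h)), lam_qφ h]
    have εs_g : W.εsMap g = W.one := by
      rw [hg, R5 u, qu]
    have fg : f g = W'.one := by
      rw [hg, fγ u, qu, hf.2.1]
    have f_g1 : f g = f W.one := by rw [fg, hf.2.1]
    have rGL : W.comul g = ∑ p ∈ S, (W.mul g p.1) ⊗ₜ[k] (W.mul g p.2) := by
      have h1 := GG u
      rw [← hg] at h1
      rw [h1]
      have h2 : ∀ p : H × H, lam p.1 = W.mul g (W.εsMap p.1) := fun p => LAMG p.1
      simp_rw [h2]
      have key := congrArg (TensorProduct.map (W.ml g) (W.ml g))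
        ((WBData.N2' W S hW hS).trans hS)
      simp only [map_sum, TensorProduct.map_tmul, WBData.ml_apply] at key
      exact key
    have rGL' : W.comul g = W.mul₂ (g ⊗ₜ[k] g) (W.comul W.one) := by
      rw [WBData.mul₂_eq, hS, map_sum, rGL]
      exact Finset.sum_congr rfl fun p _ => (WBData.mul2L_tmul W g g p.1 p.2).symm
    have εt_g : W.εtMap g = W.one := by
      rw [WBData.εt_apply W S hS g]
      have h1 : ∀ p : H × H, W.counit (W.mul p.1 g) = W.counit p.1 := by
        intro p
        have h2 := ceq2 g W.one f_g1 p.1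
        rw [hW.mul_one] at h2
        exact h2
      simp_rw [h1]
      exact WBData.sum_eps_left W S hW hS
    have COMMτ : ∀ w : H, W.mul (W.τMap S w) g = W.mul g (W.τMap S w) := by
      intro w
      have s3 := WBData.S3 W S hW hS rGL w
      rw [← s3]
      have h1 : ∀ p : H × H, W.counit (W.mul w (W.mul g p.1)) = W.counit (W.mul w p.1) := by
        intro p
        rw [← hW.mul_assoc w g p.1]
        have h2 := ceq2m g W.one f_g1 w p.1
        rw [hW.mul_one w] at h2
        exact h2
      simp_rw [h1]
      rw [WBData.τMap_apply, map_sum]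
      exact Finset.sum_congr rfl fun p _ => (map_smul (W.mul g) _ _).symm
    have COMMs : ∀ w : H, W.mul (W.εsMap w) g = W.mul g (W.εsMap w) := by
      intro w
      have s4 := WBData.S4 W S hW hS rGL w
      rw [← s4]
      have h1 : ∀ p : H × H, W.counit (W.mul w (W.mul g p.2)) = W.counit (W.mul w p.2) := by
        intro p
        rw [← hW.mul_assoc w g p.2]
        have h2 := ceq2m g W.one f_g1 w p.2
        rw [hW.mul_one w] at h2
        exact h2
      simp_rw [h1]
      rw [WBData.εs_apply W S hS w, map_sum]
      exact Finset.sum_congr rfl fun p _ => (map_smul (W.mul g) _ _).symm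
    have lGL : W.comul g = W.mul₂ (W.comul W.one) (g ⊗ₜ[k] g) := by
      have e0 : W.mul₂ (W.comul W.one) (g ⊗ₜ[k] g)
          = ∑ p ∈ S, (W.mul p.1 g) ⊗ₜ[k] (W.mul p.2 g) := by
        rw [WBData.mul₂_eq, hS, map_sum, LinearMap.sum_apply]
        exact Finset.sum_congr rfl fun p _ => WBData.mul2L_tmul W p.1 p.2 g g
      have e1 := congrArg (TensorProduct.map (W.mr g) (W.mr g))
        ((WBData.N2' W S hW hS).trans hS)
      simp only [map_sum, TensorProduct.map_tmul, WBData.mr_apply] at e1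
      have e2 : ∑ p ∈ S, (W.mul (W.εsMap p.1) g) ⊗ₜ[k] (W.mul p.2 g)
          = ∑ p ∈ S, (W.mul g (W.εsMap p.1)) ⊗ₜ[k] (W.mul p.2 g) :=
        Finset.sum_congr rfl fun p _ => by rw [COMMs p.1]
      have e3 := congrArg (TensorProduct.map (W.ml g) (W.mr g))
        ((WBData.N2' W S hW hS).trans hS)
      simp only [map_sum, TensorProduct.map_tmul, WBData.ml_apply, WBData.mr_apply] at e3
      have e4 := congrArg (TensorProduct.map (W.ml g) (W.mr g))
        ((WBData.N1' W S hW hS).trans hS)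
      simp only [map_sum, TensorProduct.map_tmul, WBData.ml_apply, WBData.mr_apply] at e4
      have e5 : ∑ p ∈ S, (W.mul g p.1) ⊗ₜ[k] (W.mul (W.τMap S p.2) g)
          = ∑ p ∈ S, (W.mul g p.1) ⊗ₜ[k] (W.mul g (W.τMap S p.2)) :=
        Finset.sum_congr rfl fun p _ => by rw [COMMτ p.2]
      have e6 := congrArg (TensorProduct.map (W.ml g) (W.ml g))
        ((WBData.N1' W S hW hS).trans hS)
      simp only [map_sum, TensorProduct.map_tmul, WBData.ml_apply] at e6
      rw [e0, ← e1, e2, e3, ← e4, e5, e6]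
      exact rGL
    have Bfinal : ∀ v, LinearMap.rTensor H ((W.Hs).subtype ∘ₗ φ.toLinearMap) (β v)
        = W.βg g ((φ v : H)) := by
      intro v
      have hβgq : W.βg g ((φ v : H)) = W.βg g (q v) := rfl
      rw [hβgq]
      have hB : LinearMap.rTensor H ((W.Hs).subtype ∘ₗ φ.toLinearMap) (β v)
          = ∑ p ∈ S, p.1 ⊗ₜ[k] (W.mul (γ v) p.2) := Bmain v
      rw [hB, WBData.βg_applyG W g (q v) S (L3q (q v) (hq1 v))]
      have hcomm := WBData.L3comm W S hW hS (q v)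
      rw [hq1 v] at hcomm
      have key := congrArg (LinearMap.lTensor H (W.mul g)) hcomm
      simp only [map_sum, LinearMap.lTensor_tmul] at key
      rw [← key]
      refine Finset.sum_congr rfl fun p _ => ?_
      rw [lam_eq v, hW.mul_assoc]
    exact ⟨g, ⟨⟨rGL', εs_g⟩, ⟨lGL, εt_g⟩⟩, fg, φ, Bfinal⟩
  · rintro ⟨g, hg, hfg, φ, hφ⟩
    exact pushf φ g hfg hφ
  · -- part C : the formula for g
    intro g φ hg hfg hφ
    set v0 : V := φ.symm oneHs with hv0
    have hval : ((φ v0 : W.Hs) : H) = W.one := by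
      rw [hv0, φ.apply_symm_apply]
      exact oneHs_val
    have hv := hφ v0
    rw [hval] at hv
    have e1 : LinearMap.rTensor H (W.counit ∘ₗ (W.Hs).subtype ∘ₗ φ.toLinearMap) (β v0)
        = LinearMap.rTensor H W.counit (W.βg g W.one) := by
      rw [LinearMap.rTensor_comp, LinearMap.comp_apply, hv]
    rw [e1]
    rw [WBData.βg_applyG W g W.one S hS, map_sum, map_sum]
    simp only [LinearMap.rTensor_tmul, lid_tmul]
    have h2 := congrArg (W.mul g) (WBData.sum_eps_left W S hW hS)
    simp only [map_sum, map_smul] at h2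
    rw [h2, hW.mul_one]
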